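/- Suppose a, b ∈ O_K^× and D = ℍ[K,a,b] is a division ring. Then for every nonzero u = δ + αx + βy + γz ∈ D, the integer ν_K(Nrd(u)) = ν_K(δ² - aα² - bβ² + abγ²) is even. Hence ν_D takes integer values on D^×, i.e. the value group Γ_D of the unramified quaternion division algebra D equals ℤ, and π is a uniformizer of D. -/

import Mathlib

/-!
Dividing the coordinates of `u ≠ 0` by one `w` of minimal valuation gives `Nrd u = w² Q(u')` with
`Q = ⟨1, -a, -b, ab⟩`, `u'` integral and some coordinate `s` of `u'` a unit; it suffices to show
that `Q(u')` is a unit. It is integral since `a, b` are. If it lay in `𝔪_K`, then with `c` the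
coefficient of `s`, the element `s² - Q(u')/c` would be congruent to the unit square `s²`
modulo `𝔪_K`, hence a square `t²` by Hensel's lemma (Newton's iteration converges because `2` is a
unit and `K` is complete); replacing `s` by `t` in `u'` gives a nontrivial zero of `Q`.
-/

noncomputable section

/-- A surjective discrete valuation `ν : K → ℤ` on a field `K`
(the value of `ν` at `0` is irrelevant: only nonzero elements are constrained). -/
structure DVal (K : Type) [Field K] : Type where
  ν : K → ℤ
  ν_mul : ∀ x y : K, x ≠ 0 → y ≠ 0 → ν (x * y) = ν x + ν y
  ν_add : ∀ x y : K, x ≠ 0 → y ≠ 0 → x + y ≠ 0 → min (ν x) (ν y) ≤ ν (x + y)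
  ν_one : ν 1 = 0
  ν_surj : ∀ n : ℤ, ∃ x : K, x ≠ 0 ∧ ν x = n

namespace DVal

variable {K : Type} [Field K]

/-- `x` belongs to the valuation ring `O_K`. -/
def Int (V : DVal K) (x : K) : Prop := x = 0 ∨ 0 ≤ V.ν x

/-- `x` is a unit of the valuation ring `O_K`. -/
def IntUnit (V : DVal K) (x : K) : Prop := x ≠ 0 ∧ V.ν x = 0

/-- `x` belongs to the maximal ideal `m_K` of the valuation ring `O_K`. -/
def MaxIdeal (V : DVal K) (x : K) : Prop := x = 0 ∨ 1 ≤ V.ν x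

/-- `K` is complete with respect to the valuation `ν`: every Cauchy sequence converges. -/
def IsComplete (V : DVal K) : Prop :=
  ∀ f : ℕ → K,
    (∀ M : ℤ, ∃ N : ℕ, ∀ m n : ℕ, N ≤ m → N ≤ n →
      f m - f n = 0 ∨ M ≤ V.ν (f m - f n)) →
    ∃ L : K, ∀ M : ℤ, ∃ N : ℕ, ∀ n : ℕ, N ≤ n →
      f n - L = 0 ∨ M ≤ V.ν (f n - L)

/-- The residue field `k = O_K/m_K` has characteristic different from `2`,
i.e. `2` is a unit of the valuation ring `O_K`. -/
def ResCharNeTwo (V : DVal K) : Prop := (2 : K) ≠ 0 ∧ V.ν 2 = 0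

end DVal

/-- The reduced norm of a quaternion `u = δ + αx + βy + γz ∈ ℍ[K,a,b]`:
`Nrd u = u·τ(u) = δ² - aα² - bβ² + abγ²`. -/
def qnrd {K : Type} [Field K] (a b : K) (u : QuaternionAlgebra K a 0 b) : K :=
  u.re ^ 2 - a * u.imI ^ 2 - b * u.imJ ^ 2 + a * b * u.imK ^ 2

/-- The canonical involution `τ(δ + αx + βy + γz) = δ - αx - βy - γz` of `ℍ[K,a,b]`. -/
def qtau {K : Type} [Field K] {a b : K} (u : QuaternionAlgebra K a 0 b) :
    QuaternionAlgebra K a 0 b :=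
  ⟨u.re, -u.imI, -u.imJ, -u.imK⟩

/-- The norm form `⟨1,-a,-b,ab⟩` of `ℍ[K,a,b]` is anisotropic over `K`
(equivalently, `ℍ[K,a,b]` is a division ring). -/
def QAniso {K : Type} [Field K] (a b : K) : Prop :=
  ∀ d e f g : K, d ^ 2 - a * e ^ 2 - b * f ^ 2 + a * b * g ^ 2 = 0 →
    d = 0 ∧ e = 0 ∧ f = 0 ∧ g = 0

/-- The valuation `ν_D(u) = (1/2)·ν_K(Nrd u)` of the quaternion division algebra
`D = ℍ[K,a,b]` (at nonzero `u`). -/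
def qnu {K : Type} [Field K] (V : DVal K) (a b : K) (u : QuaternionAlgebra K a 0 b) : ℚ :=
  (V.ν (qnrd a b u) : ℚ) / 2

def newtonSqrt {K : Type} [Field K] (c s : K) : ℕ → K
  | 0 => s
  | n + 1 => (newtonSqrt c s n + c / newtonSqrt c s n) / 2

namespace DVal

variable {K : Type} [Field K] (V : DVal K)

/-- `x ∈ 𝔪_K ^ M`; the junk value `ν 0` is never consulted. -/
def ValGe (M : ℤ) (x : K) : Prop := x = 0 ∨ M ≤ V.ν x

lemma ν_neg_one : V.ν (-1 : K) = 0 := by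
  have h := V.ν_mul (-1) (-1) (by norm_num) (by norm_num)
  rw [neg_one_mul, neg_neg, V.ν_one] at h
  omega

lemma ν_neg {x : K} (hx : x ≠ 0) : V.ν (-x) = V.ν x := by
  rw [← neg_one_mul, V.ν_mul _ _ (by norm_num) hx, ν_neg_one, zero_add]

lemma ν_inv {x : K} (hx : x ≠ 0) : V.ν x⁻¹ = -V.ν x := by
  have h := V.ν_mul x x⁻¹ hx (inv_ne_zero hx)
  rw [mul_inv_cancel₀ hx, V.ν_one] at h
  omega

lemma ν_div {x y : K} (hx : x ≠ 0) (hy : y ≠ 0) : V.ν (x / y) = V.ν x - V.ν y := by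
  rw [div_eq_mul_inv, V.ν_mul x y⁻¹ hx (inv_ne_zero hy), V.ν_inv hy, sub_eq_add_neg]

lemma ν_sq {x : K} (hx : x ≠ 0) : V.ν (x ^ 2) = 2 * V.ν x := by
  rw [sq, V.ν_mul x x hx hx, two_mul]

lemma ν_add_eq_of_lt {x y : K} (hx : x ≠ 0) (hy : y ≠ 0) (h : V.ν x < V.ν y) :
    x + y ≠ 0 ∧ V.ν (x + y) = V.ν x := by
  have hxy : x + y ≠ 0 := by
    intro h0
    rw [eq_neg_of_add_eq_zero_right h0, V.ν_neg hx] at h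
    exact h.false
  refine ⟨hxy, le_antisymm ?_ (min_eq_left h.le ▸ V.ν_add x y hx hy hxy)⟩
  have h' := V.ν_add (x + y) (-y) hxy (neg_ne_zero.mpr hy) (by simpa using hx)
  rw [add_neg_cancel_right, V.ν_neg hy] at h'
  omega

namespace IntUnit

variable {V} {x y : K}

lemma valGe (h : V.IntUnit x) : V.ValGe 0 x := Or.inr h.2.ge

lemma neg (h : V.IntUnit x) : V.IntUnit (-x) := ⟨neg_ne_zero.mpr h.1, by rw [V.ν_neg h.1, h.2]⟩

lemma mul (hx : V.IntUnit x) (hy : V.IntUnit y) : V.IntUnit (x * y) :=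
  ⟨mul_ne_zero hx.1 hy.1, by rw [V.ν_mul x y hx.1 hy.1, hx.2, hy.2, add_zero]⟩

lemma inv (h : V.IntUnit x) : V.IntUnit x⁻¹ :=
  ⟨inv_ne_zero h.1, by rw [V.ν_inv h.1, h.2, neg_zero]⟩

lemma sq (h : V.IntUnit x) : V.IntUnit (x ^ 2) := by rw [pow_two]; exact h.mul h

lemma add_of_valGe_one (hx : V.IntUnit x) (hy : V.ValGe 1 y) : V.IntUnit (x + y) := by
  rcases eq_or_ne y 0 with rfl | hy0
  · rwa [add_zero]
  have hlt : V.ν x < V.ν y := by rw [hx.2]; exact hy.resolve_left hy0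
  obtain ⟨hxy, hν⟩ := V.ν_add_eq_of_lt hx.1 hy0 hlt
  exact ⟨hxy, hν.trans hx.2⟩

end IntUnit

namespace ValGe

variable {V} {M N : ℤ} {x y : K}

lemma zero : V.ValGe M 0 := Or.inl rfl

lemma mono (h : V.ValGe M x) (hNM : N ≤ M) : V.ValGe N x :=
  h.imp_right hNM.trans

lemma neg (h : V.ValGe M x) : V.ValGe M (-x) := by
  rcases h with rfl | h
  · simpa using zero
  by_cases hx : x = 0
  · simpa [hx] using zero
  exact Or.inr (by rwa [V.ν_neg hx])

lemma add (hx : V.ValGe M x) (hy : V.ValGe M y) : V.ValGe M (x + y) := by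
  by_cases hx0 : x = 0
  · rwa [hx0, zero_add]
  by_cases hy0 : y = 0
  · rwa [hy0, add_zero]
  by_cases hxy : x + y = 0
  · exact Or.inl hxy
  exact Or.inr ((le_min (hx.resolve_left hx0) (hy.resolve_left hy0)).trans
    (V.ν_add x y hx0 hy0 hxy))

lemma sub (hx : V.ValGe M x) (hy : V.ValGe M y) : V.ValGe M (x - y) := by
  rw [sub_eq_add_neg]; exact hx.add hy.neg

lemma mul (hx : V.ValGe M x) (hy : V.ValGe N y) : V.ValGe (M + N) (x * y) := by
  by_cases hx0 : x = 0
  · simpa [hx0] using zero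
  by_cases hy0 : y = 0
  · simpa [hy0] using zero
  exact Or.inr (by
    rw [V.ν_mul x y hx0 hy0]
    exact add_le_add (hx.resolve_left hx0) (hy.resolve_left hy0))

lemma sum {ι : Type*} (s : Finset ι) {f : ι → K} (h : ∀ i ∈ s, V.ValGe M (f i)) :
    V.ValGe M (∑ i ∈ s, f i) :=
  Finset.sum_induction f _ (fun _ _ => add) zero h

lemma eq_zero (h : ∀ M, V.ValGe M x) : x = 0 :=
  (h (V.ν x + 1)).resolve_right (by omega)

lemma div_intUnit {w : K} (hx : V.ValGe M x) (hw : V.IntUnit w) :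
    V.ValGe M (x / w) := by
  simpa [div_eq_mul_inv] using hx.mul hw.inv.valGe

end ValGe

lemma cauchy_of_valGe_succ_sub {f : ℕ → K} (h : ∀ n : ℕ, V.ValGe n (f (n + 1) - f n)) :
    ∀ M : ℤ, ∃ N : ℕ, ∀ m n : ℕ, N ≤ m → N ≤ n → V.ValGe M (f m - f n) := by
  have tail (n k : ℕ) : V.ValGe n (f (n + k) - f n) := by
    induction k with
    | zero => simpa using ValGe.zero
    | succ k ih =>
      have hstep : V.ValGe n (f (n + k + 1) - f (n + k)) :=
        (h (n + k)).mono (by push_cast; omega)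
      simpa [← add_assoc] using hstep.add ih
  intro M
  refine ⟨M.toNat, fun m n hm hn => ?_⟩
  rcases le_total n m with hnm | hmn
  · obtain ⟨k, rfl⟩ := Nat.exists_eq_add_of_le hnm
    exact (tail n k).mono (by omega)
  · obtain ⟨k, rfl⟩ := Nat.exists_eq_add_of_le hmn
    simpa using ((tail m k).mono (by omega : M ≤ (m : ℤ))).neg

lemma newtonStep_spec {c t : K} {M : ℤ} (h2 : V.IntUnit 2) (ht : V.IntUnit t)
    (he : V.ValGe M (t ^ 2 - c)) (hM : 1 ≤ M) :
    V.ValGe M ((t + c / t) / 2 - t) ∧ V.IntUnit ((t + c / t) / 2) ∧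
      V.ValGe (M + M) (((t + c / t) / 2) ^ 2 - c) := by
  have h2t := h2.mul ht
  have hsub : (t + c / t) / 2 - t = -(t ^ 2 - c) / (2 * t) := by
    field_simp [ht.1, h2.1]; ring
  have hsq : ((t + c / t) / 2) ^ 2 - c = (t ^ 2 - c) * (t ^ 2 - c) / (2 * t) ^ 2 := by
    field_simp [ht.1, h2.1]; ring
  have hdiff : V.ValGe M ((t + c / t) / 2 - t) := by
    rw [hsub]; exact he.neg.div_intUnit h2t
  refine ⟨hdiff, ?_, ?_⟩
  · simpa using ht.add_of_valGe_one (hdiff.mono hM)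
  · rw [hsq]; exact (he.mul he).div_intUnit h2t.sq

lemma newtonSqrt_spec {c s : K} (h2 : V.IntUnit 2) (hs : V.IntUnit s)
    (hc : V.ValGe 1 (s ^ 2 - c)) (n : ℕ) :
    V.IntUnit (newtonSqrt c s n) ∧ V.ValGe (n + 1) (newtonSqrt c s n ^ 2 - c) := by
  induction n with
  | zero => simpa [newtonSqrt] using And.intro hs hc
  | succ n ih =>
    obtain ⟨-, hunit, hsq⟩ := V.newtonStep_spec h2 ih.1 ih.2 (by omega)
    exact ⟨hunit, hsq.mono (by push_cast; omega)⟩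

theorem exists_sq_eq_of_valGe_one (hcomp : V.IsComplete) (h2 : V.IntUnit 2) {c s : K}
    (hs : V.IntUnit s) (hc : V.ValGe 1 (s ^ 2 - c)) : ∃ t, t ^ 2 = c := by
  set t := newtonSqrt c s
  have hspec := V.newtonSqrt_spec h2 hs hc
  have hcauchy := V.cauchy_of_valGe_succ_sub fun n =>
    show V.ValGe n (t (n + 1) - t n) from
      (V.newtonStep_spec h2 (hspec n).1 (hspec n).2 (by omega)).1.mono (by omega)
  obtain ⟨L, hL⟩ := hcomp t hcauchy
  refine ⟨L, sub_eq_zero.mp (ValGe.eq_zero (V := V) fun M => ?_)⟩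
  obtain ⟨N, hN⟩ := hL (max M 0)
  set n := max N M.toNat
  have hsq : V.ValGe M (t n ^ 2 - c) := (hspec n).2.mono (by omega)
  have hsub : V.ValGe (max M 0) (t n - L) := hN n (le_max_left _ _)
  have hadd : V.ValGe 0 (t n + L) := by
    rw [show t n + L = 2 * t n - (t n - L) by ring]
    exact (h2.mul (hspec n).1).valGe.sub (hsub.mono (le_max_right _ _))
  convert ((hsub.mul hadd).mono (by omega : M ≤ max M 0 + 0)).neg.add hsq using 1
  ring

variable {ι : Type*} [Fintype ι]

lemma sum_mul_sq_update_sub [DecidableEq ι] (c x : ι → K) (i₀ : ι) (t : K) :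
    ∑ i, c i * Function.update x i₀ t i ^ 2 - ∑ i, c i * x i ^ 2 =
      c i₀ * (t ^ 2 - x i₀ ^ 2) := by
  rw [← Finset.sum_sub_distrib, Finset.sum_eq_single i₀ (fun i _ hi => by simp [hi]) (by simp)]
  simp [mul_sub]

theorem ν_diagForm_eq_zero_of_primitive (hcomp : V.IsComplete) (h2 : V.IntUnit 2)
    {c x : ι → K} (hc : ∀ i, V.IntUnit (c i))
    (haniso : ∀ y : ι → K, ∑ i, c i * y i ^ 2 = 0 → y = 0)
    (hx : ∀ i, V.ValGe 0 (x i)) {i₀ : ι} (hi₀ : V.IntUnit (x i₀)) :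
    V.ν (∑ i, c i * x i ^ 2) = 0 := by
  classical
  set Q := ∑ i, c i * x i ^ 2
  have hQ0 : Q ≠ 0 := fun h => hi₀.1 (by rw [haniso x h, Pi.zero_apply])
  have hQint : V.ValGe 0 Q := ValGe.sum _ fun i _ => by
    simpa [sq] using (hc i).valGe.mul ((hx i).mul (hx i))
  refine le_antisymm (not_lt.mp fun hQpos => ?_) (hQint.resolve_left hQ0)
  have hQ : V.ValGe 1 (Q / c i₀) := ValGe.div_intUnit (Or.inr hQpos) (hc i₀)
  obtain ⟨t, ht⟩ := V.exists_sq_eq_of_valGe_one hcomp h2 hi₀ (c := x i₀ ^ 2 - Q / c i₀)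
    (by simpa using hQ)
  have hzero : ∑ i, c i * Function.update x i₀ t i ^ 2 = 0 := by
    have := sum_mul_sq_update_sub c x i₀ t
    rw [ht] at this
    field_simp [(hc i₀).1] at this
    linear_combination this
  have ht0 : t = 0 := by simpa using congrFun (haniso _ hzero) i₀
  have hunit : V.IntUnit (x i₀ ^ 2 - Q / c i₀) := by
    simpa [sub_eq_add_neg] using hi₀.sq.add_of_valGe_one hQ.neg
  exact hunit.1 (by rw [← ht, ht0]; ring)

theorem even_ν_diagForm (hcomp : V.IsComplete) (h2 : V.IntUnit 2)
    {c : ι → K} (hc : ∀ i, V.IntUnit (c i))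
    (haniso : ∀ y : ι → K, ∑ i, c i * y i ^ 2 = 0 → y = 0) {x : ι → K} (hx : x ≠ 0) :
    Even (V.ν (∑ i, c i * x i ^ 2)) := by
  classical
  obtain ⟨j, hj⟩ := Function.ne_iff.mp hx
  obtain ⟨i₀, hi₀, hmin⟩ :=
    Finset.exists_min_image {i | x i ≠ 0} (V.ν ∘ x) ⟨j, by simpa using hj⟩
  set w := x i₀
  have hw : w ≠ 0 := by simpa using hi₀
  have hprim : ∀ i, V.ValGe 0 (x i / w) := fun i => by
    by_cases hxi : x i = 0
    · simp [hxi, ValGe.zero]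
    · exact Or.inr (by
        rw [V.ν_div hxi hw, sub_nonneg]; exact hmin i (by simpa using hxi))
  have hunit : V.IntUnit (x i₀ / w) := by
    rw [div_self hw]; exact ⟨one_ne_zero, V.ν_one⟩
  have hscale : ∑ i, c i * x i ^ 2 = w ^ 2 * ∑ i, c i * (x i / w) ^ 2 := by
    rw [Finset.mul_sum]; congr 1; ext i; field_simp
  have hQ0 : ∑ i, c i * (x i / w) ^ 2 ≠ 0 := fun h =>
    hunit.1 (congrFun (haniso (fun i => x i / w) h) i₀)
  rw [hscale, V.ν_mul _ _ (pow_ne_zero 2 hw) hQ0, V.ν_sq hw,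
    V.ν_diagForm_eq_zero_of_primitive hcomp h2 hc haniso hprim hunit, add_zero]
  exact even_two_mul _

lemma even_ν_qnrd (hcomp : V.IsComplete) (h2 : V.IntUnit 2) {a b : K}
    (ha : V.IntUnit a) (hb : V.IntUnit b) (haniso : QAniso a b)
    {u : QuaternionAlgebra K a 0 b} (hu : u ≠ 0) :
    Even (V.ν (qnrd a b u)) := by
  have hform : qnrd a b u =
      ∑ i, ![1, -a, -b, a * b] i * ![u.re, u.imI, u.imJ, u.imK] i ^ 2 := by
    simp [qnrd, Fin.sum_univ_four]; ring
  rw [hform]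
  refine V.even_ν_diagForm hcomp h2 (fun i => ?_) (fun y hy => ?_) (fun h => hu ?_)
  · fin_cases i
    exacts [⟨one_ne_zero, V.ν_one⟩, ha.neg, hb.neg, ha.mul hb]
  · obtain ⟨hd, he, hf, hg⟩ := haniso (y 0) (y 1) (y 2) (y 3) (by
      simp [Fin.sum_univ_four] at hy; linear_combination hy)
    ext i; fin_cases i <;> assumption
  · ext
    exacts [congrFun h 0, congrFun h 1, congrFun h 2, congrFun h 3]

end DVal

lemma qnu_scalar {K : Type} [Field K] (V : DVal K) {a b w : K} (hw : w ≠ 0) :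
    qnu V a b (⟨w, 0, 0, 0⟩ : QuaternionAlgebra K a 0 b) = V.ν w := by
  rw [qnu, show qnrd a b ⟨w, 0, 0, 0⟩ = w ^ 2 by simp [qnrd], V.ν_sq hw]
  push_cast; ring

/-- if `a, b ∈ O_K^×` and `D = ℍ[K,a,b]` is a division ring, then
`ν_K(Nrd u)` is even for every nonzero `u ∈ D`; hence `ν_D` takes integer values,
the value group of `D` is `ℤ`, and `π` is a uniformizer of `D`. -/
theorem stmt_13 (K : Type) [Field K] (V : DVal K)
    (hcomp : V.IsComplete) (hchar : V.ResCharNeTwo)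
    (a b : K) (ha0 : a ≠ 0) (hva : V.ν a = 0) (hb0 : b ≠ 0) (hvb : V.ν b = 0)
    (haniso : QAniso a b)
    (ϖ : K) (hϖ0 : ϖ ≠ 0) (hvϖ : V.ν ϖ = 1) :
    (∀ u : QuaternionAlgebra K a 0 b, u ≠ 0 →
        Even (V.ν (qnrd a b u)) ∧ ∃ n : ℤ, qnu V a b u = (n : ℚ)) ∧
      (∀ n : ℤ, ∃ u : QuaternionAlgebra K a 0 b, u ≠ 0 ∧ qnu V a b u = (n : ℚ)) ∧
      qnu V a b (⟨ϖ, 0, 0, 0⟩ : QuaternionAlgebra K a 0 b) = 1 := by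
  refine ⟨fun u hu => ?_, fun n => ?_, ?_⟩
  · obtain ⟨m, hm⟩ := V.even_ν_qnrd hcomp hchar ⟨ha0, hva⟩ ⟨hb0, hvb⟩ haniso hu
    exact ⟨⟨m, hm⟩, m, by rw [qnu, hm]; push_cast; ring⟩
  · obtain ⟨w, hw0, rfl⟩ := V.ν_surj n
    exact ⟨⟨w, 0, 0, 0⟩, fun h => hw0 (congrArg QuaternionAlgebra.re h), qnu_scalar V hw0⟩
  · rw [qnu_scalar V hϖ0, hvϖ, Int.cast_one]
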